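/- arXiv:2510.01545 — 4 statements merged into one kernel-verified Lean document; each statement's English description precedes it below -/
import Mathlib

section
/- For the function σ(x) = 1/(1 + exp(−x)), the second-order Taylor remainder bound holds: for every real x, |log σ(x) + log 2 − x/2| ≤ x²/8. -/
/-!
Factoring `exp (-x/2)` out of `1 + exp (-x)` gives `log σ(x) + log 2 - x/2 = -log (cosh (x/2))`,
and `1 ≤ cosh t ≤ exp (t²/2)` gives `0 ≤ log (cosh t) ≤ t²/2`.
-/

/-- The logistic sigmoid function. -/
noncomputable def sigmoid (x : ℝ) : ℝ := 1 / (1 + Real.exp (-x))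

open Real (exp log cosh)

theorem one_add_exp_neg_eq_two_mul_exp_mul_cosh (x : ℝ) :
    1 + exp (-x) = 2 * exp (-(x / 2)) * cosh (x / 2) := by
  rw [Real.cosh_eq, mul_comm 2, mul_assoc, mul_div_cancel₀ _ two_ne_zero, mul_add,
    ← Real.exp_add, ← Real.exp_add, neg_add_cancel, Real.exp_zero, ← neg_add, add_halves]

theorem log_sigmoid_eq_neg_log_one_add_exp_neg (x : ℝ) :
    log (sigmoid x) = -log (1 + exp (-x)) := by
  rw [sigmoid, one_div, Real.log_inv]

theorem log_sigmoid_add_log_two_sub_half_eq (x : ℝ) :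
    log (sigmoid x) + log 2 - x / 2 = -log (cosh (x / 2)) := by
  rw [log_sigmoid_eq_neg_log_one_add_exp_neg, one_add_exp_neg_eq_two_mul_exp_mul_cosh,
    Real.log_mul (by positivity) (Real.cosh_pos _).ne',
    Real.log_mul two_ne_zero (Real.exp_ne_zero _), Real.log_exp]
  ring

theorem abs_log_cosh_le (t : ℝ) : |log (cosh t)| ≤ t ^ 2 / 2 := by
  rw [abs_of_nonneg (Real.log_nonneg (Real.one_le_cosh t))]
  calc log (cosh t) ≤ log (exp (t ^ 2 / 2)) :=
        Real.log_le_log (Real.cosh_pos t) (Real.cosh_le_exp_half_sq t)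
    _ = t ^ 2 / 2 := Real.log_exp _

theorem logSigmoid_taylor_bound (x : ℝ) :
    |Real.log (sigmoid x) + Real.log 2 - x / 2| ≤ x ^ 2 / 8 := by
  rw [log_sigmoid_add_log_two_sub_half_eq, abs_neg]
  calc |log (cosh (x / 2))| ≤ (x / 2) ^ 2 / 2 := abs_log_cosh_le _
    _ = x ^ 2 / 8 := by ring
end

section
/- Let S and A be finite sets, and let π_h, π_n : S → (probability distributions on A). Let d be a probability distribution on S. Suppose for all s, a, a' that |log π_h(a|s) − log π_h(a'|s)| ≤ M and |log π_n(a|s) − log π_n(a'|s)| ≤ M, with all probabilities strictly positive. Define for a policy π: g(π) = E_{s∼d} E_{a⁺∼π_h(s), a⁻∼π_n(s)}[ −log σ( β(log π(a⁺|s) − log π(a⁻|s)) ) ], where σ is the sigmoid and β > 0. Then E_{s∼d} D_TV(π_h(·|s), π_n(·|s)) ≤ sqrt( (g(π_n) − g(π_h))/(2β) + βM²/8 ). -/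
/-!
With `ℓ(x) = -log σ(x) = log 2 - x/2 + log cosh(x/2)` one has
`log 2 - x/2 ≤ ℓ(x) ≤ log 2 - x/2 + x²/8`. Bounding the loss of `π_n` from below by the
linear part and the loss of `π_h` from above, the linear parts leave `β/2` times the Jeffreys
divergence `J = KL(π_h ‖ π_n) + KL(π_n ‖ π_h)`, since for `c = log π_h - log π_n` the pair
expectation `E[c(a⁺) - c(a⁻)]` is `∑ (π_h - π_n) c`; the quadratic error is at most `β²M²/8`
by the log-ratio bound on `π_h`. Pinsker's inequality in the form `4 TV² ≤ J` (from
`2(p - q)²/(p + q) ≤ (p - q)(log p - log q)` and Cauchy–Schwarz) and Jensen over the states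
finish the proof.
-/

open Finset

noncomputable def tvDist {X : Type*} [Fintype X] (P Q : X → ℝ) : ℝ :=
  (∑ x, |P x - Q x|) / 2

/-- The ideal-pair preference loss of a policy `π`. -/
noncomputable def gLoss {S A : Type*} [Fintype S] [Fintype A]
    (d : S → ℝ) (πh πn : S → A → ℝ) (β : ℝ) (π : S → A → ℝ) : ℝ :=
  ∑ s, d s * ∑ ap, ∑ an, πh s ap * πn s an *
    (-(Real.log (sigmoid (β * (Real.log (π s ap) - Real.log (π s an))))))

open Real hiding sigmoid

lemma neg_log_sigmoid_eq (x : ℝ) :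
    -log (sigmoid x) = log 2 - x / 2 + log (cosh (x / 2)) := by
  have h : 1 + exp (-x) = 2 * exp (-(x / 2)) * cosh (x / 2) := by
    have e1 : exp (-(x / 2)) * exp (x / 2) = 1 := by rw [← exp_add, neg_add_cancel, exp_zero]
    have e2 : exp (-(x / 2)) * exp (-(x / 2)) = exp (-x) := by rw [← exp_add]; ring_nf
    rw [cosh_eq]
    linear_combination -e1 - e2
  rw [sigmoid, one_div, log_inv, neg_neg, h, log_mul (by positivity) (cosh_pos _).ne',
    log_mul two_ne_zero (exp_pos _).ne', log_exp]
  ring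

lemma log_two_sub_half_le_neg_log_sigmoid (x : ℝ) : log 2 - x / 2 ≤ -log (sigmoid x) := by
  rw [neg_log_sigmoid_eq]
  linarith [log_nonneg (one_le_cosh (x / 2))]

lemma neg_log_sigmoid_le (x : ℝ) : -log (sigmoid x) ≤ log 2 - x / 2 + x ^ 2 / 8 := by
  have h : log (cosh (x / 2)) ≤ x ^ 2 / 8 := by
    calc log (cosh (x / 2)) ≤ log (exp ((x / 2) ^ 2 / 2)) :=
          log_le_log (cosh_pos _) (cosh_le_exp_half_sq _)
      _ = x ^ 2 / 8 := by rw [log_exp]; ring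
  rw [neg_log_sigmoid_eq]
  linarith

lemma two_mul_sq_le_mul_log_sub_log {x : ℝ} (hx : |x| < 1) :
    2 * x ^ 2 ≤ x * (log (1 + x) - log (1 - x)) := by
  have hsum := (hasSum_log_sub_log_of_abs_lt_one hx).mul_left x
  calc 2 * x ^ 2 = x * (2 * (1 / (2 * ((0 : ℕ) : ℝ) + 1)) * x ^ (2 * 0 + 1)) := by
        norm_num; ring
    _ ≤ _ := le_hasSum hsum 0 fun k _ => ?_
  have hk : x * (2 * (1 / (2 * k + 1)) * x ^ (2 * k + 1)) =
      2 / (2 * k + 1) * (x ^ (k + 1)) ^ 2 := by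
    ring
  rw [hk]
  positivity

/-- The scalar form of the bound "logarithmic mean ≤ arithmetic mean". -/
lemma two_mul_sq_div_add_le_mul_log_sub_log {p q : ℝ} (hp : 0 < p) (hq : 0 < q) :
    2 * (p - q) ^ 2 / (p + q) ≤ (p - q) * (log p - log q) := by
  set x := (p - q) / (p + q) with hx
  have hpq : 0 < p + q := add_pos hp hq
  have habs : |x| < 1 := by
    rw [abs_lt, lt_div_iff₀ hpq, div_lt_iff₀ hpq]; constructor <;> linarith
  have hlog : log (1 + x) - log (1 - x) = log p - log q := by
    have h1 : 1 + x = 2 / (p + q) * p := by rw [hx]; field_simp; ring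
    have h2 : 1 - x = 2 / (p + q) * q := by rw [hx]; field_simp; ring
    rw [h1, h2, log_mul (by positivity) hp.ne', log_mul (by positivity) hq.ne']
    ring
  calc 2 * (p - q) ^ 2 / (p + q) = (p + q) * (2 * x ^ 2) := by rw [hx]; field_simp
    _ ≤ (p + q) * (x * (log p - log q)) := by
        rw [← hlog]; exact mul_le_mul_of_nonneg_left (two_mul_sq_le_mul_log_sub_log habs) hpq.le
    _ = (p - q) * (log p - log q) := by rw [hx]; field_simp

/-- The Jeffreys divergence `KL(p ‖ q) + KL(q ‖ p)` of two probability vectors. -/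
noncomputable def jeffreysDiv {A : Type*} [Fintype A] (p q : A → ℝ) : ℝ :=
  ∑ a, (p a - q a) * (log (p a) - log (q a))

lemma sq_tvDist_le_jeffreysDiv {A : Type*} [Fintype A] {p q : A → ℝ}
    (hp : ∀ a, 0 < p a) (hq : ∀ a, 0 < q a) (hp1 : ∑ a, p a = 1) (hq1 : ∑ a, q a = 1) :
    tvDist p q ^ 2 ≤ jeffreysDiv p q / 4 := by
  have hsed := sq_sum_div_le_sum_sq_div univ (fun a => |p a - q a|)
    (g := fun a => p a + q a) fun a _ => add_pos (hp a) (hq a)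
  simp only [sum_add_distrib, hp1, hq1, sq_abs] at hsed
  have hsum : ∑ a, (p a - q a) ^ 2 / (p a + q a) ≤ jeffreysDiv p q / 2 := by
    rw [jeffreysDiv, sum_div]
    refine sum_le_sum fun a _ => ?_
    have h := two_mul_sq_div_add_le_mul_log_sub_log (hp a) (hq a)
    rw [mul_div_assoc] at h
    linarith
  rw [tvDist, div_pow]
  linarith

lemma sq_sum_mul_le_sum_mul_sq {ι : Type*} (s : Finset ι) {w x : ι → ℝ}
    (hw0 : ∀ i ∈ s, 0 ≤ w i) (hw1 : ∑ i ∈ s, w i = 1) :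
    (∑ i ∈ s, w i * x i) ^ 2 ≤ ∑ i ∈ s, w i * x i ^ 2 := by
  simpa only [smul_eq_mul] using
    (even_two.convexOn_pow (𝕜 := ℝ)).map_sum_le hw0 hw1 fun i _ => Set.mem_univ (x i)

lemma sum_sum_mul_mul_sub {A R : Type*} [Fintype A] [CommRing R] {p q : A → R}
    (hp1 : ∑ a, p a = 1) (hq1 : ∑ a, q a = 1) (f : A → R) :
    ∑ a, ∑ b, p a * q b * (f a - f b) = ∑ a, (p a - q a) * f a := by
  have h : ∀ a b, p a * q b * (f a - f b) = p a * f a * q b - p a * (q b * f b) :=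
    fun a b => by ring
  simp only [h, sum_sub_distrib, ← mul_sum, ← sum_mul, hq1, hp1, mul_one, one_mul, sub_mul]

noncomputable def pairLoss {A : Type*} [Fintype A] (p q : A → ℝ) (β : ℝ) (ρ : A → ℝ) : ℝ :=
  ∑ ap, ∑ an, p ap * q an * (-(log (sigmoid (β * (log (ρ ap) - log (ρ an))))))

lemma gLoss_eq_sum_pairLoss {S A : Type*} [Fintype S] [Fintype A]
    (d : S → ℝ) (πh πn : S → A → ℝ) (β : ℝ) (ρ : S → A → ℝ) :
    gLoss d πh πn β ρ = ∑ s, d s * pairLoss (πh s) (πn s) β (ρ s) :=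
  rfl

lemma pairLoss_sub_pairLoss_ge {A : Type*} [Fintype A] {p q : A → ℝ}
    (hp : ∀ a, 0 ≤ p a) (hq : ∀ a, 0 ≤ q a) (hp1 : ∑ a, p a = 1) (hq1 : ∑ a, q a = 1)
    {β M : ℝ} (hpM : ∀ a a', |log (p a) - log (p a')| ≤ M) :
    β / 2 * jeffreysDiv p q - β ^ 2 * M ^ 2 / 8 ≤ pairLoss p q β q - pairLoss p q β p := by
  set c : A → ℝ := fun a => log (p a) - log (q a)
  have hpoint : ∀ a b, β / 2 * (c a - c b) - β ^ 2 * M ^ 2 / 8 ≤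
      -log (sigmoid (β * (log (q a) - log (q b)))) -
        -log (sigmoid (β * (log (p a) - log (p b)))) := by
    intro a b
    have hsq : (β * (log (p a) - log (p b))) ^ 2 ≤ β ^ 2 * M ^ 2 := by
      obtain ⟨hlo, hhi⟩ := abs_le.1 (hpM a b)
      rw [mul_pow]
      exact mul_le_mul_of_nonneg_left (sq_le_sq' hlo hhi) (sq_nonneg β)
    have hlb := log_two_sub_half_le_neg_log_sigmoid (β * (log (q a) - log (q b)))
    have hub := neg_log_sigmoid_le (β * (log (p a) - log (p b)))
    simp only [c]
    linarith
  have hw : ∑ a, ∑ b, p a * q b = 1 := by rw [← sum_mul_sum, hp1, hq1, one_mul]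
  calc β / 2 * jeffreysDiv p q - β ^ 2 * M ^ 2 / 8
      = β / 2 * ∑ a, ∑ b, p a * q b * (c a - c b) - β ^ 2 * M ^ 2 / 8 * ∑ a, ∑ b, p a * q b := by
        rw [sum_sum_mul_mul_sub hp1 hq1, hw, mul_one, jeffreysDiv]
    _ = ∑ a, ∑ b, p a * q b * (β / 2 * (c a - c b) - β ^ 2 * M ^ 2 / 8) := by
        simp only [mul_sum, ← sum_sub_distrib]
        exact sum_congr rfl fun a _ => sum_congr rfl fun b _ => by ring
    _ ≤ ∑ a, ∑ b, p a * q b * (-log (sigmoid (β * (log (q a) - log (q b)))) -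
          -log (sigmoid (β * (log (p a) - log (p b))))) :=
        sum_le_sum fun a _ => sum_le_sum fun b _ =>
          mul_le_mul_of_nonneg_left (hpoint a b) (mul_nonneg (hp a) (hq b))
    _ = pairLoss p q β q - pairLoss p q β p := by
        simp only [pairLoss, ← sum_sub_distrib, ← mul_sub]

lemma gLoss_sub_gLoss_ge {S A : Type*} [Fintype S] [Fintype A]
    {d : S → ℝ} {πh πn : S → A → ℝ} {β M : ℝ}
    (hd0 : ∀ s, 0 ≤ d s) (hd1 : ∑ s, d s = 1)
    (hh0 : ∀ s a, 0 ≤ πh s a) (hn0 : ∀ s a, 0 ≤ πn s a)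
    (hh1 : ∀ s, ∑ a, πh s a = 1) (hn1 : ∀ s, ∑ a, πn s a = 1)
    (hhM : ∀ s a a', |log (πh s a) - log (πh s a')| ≤ M) :
    β / 2 * ∑ s, d s * jeffreysDiv (πh s) (πn s) - β ^ 2 * M ^ 2 / 8 ≤
      gLoss d πh πn β πn - gLoss d πh πn β πh := by
  rw [gLoss_eq_sum_pairLoss, gLoss_eq_sum_pairLoss, ← sum_sub_distrib]
  calc β / 2 * ∑ s, d s * jeffreysDiv (πh s) (πn s) - β ^ 2 * M ^ 2 / 8
      = ∑ s, d s * (β / 2 * jeffreysDiv (πh s) (πn s) - β ^ 2 * M ^ 2 / 8) := by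
        simp only [mul_sub, sum_sub_distrib, ← sum_mul, hd1, one_mul, mul_sum, mul_left_comm (d _)]
    _ ≤ ∑ s, d s * (pairLoss (πh s) (πn s) β (πn s) - pairLoss (πh s) (πn s) β (πh s)) :=
        sum_le_sum fun s _ => mul_le_mul_of_nonneg_left
          (pairLoss_sub_pairLoss_ge (hh0 s) (hn0 s) (hh1 s) (hn1 s) (hhM s)) (hd0 s)
    _ = _ := by simp only [mul_sub]

theorem tv_le_sqrt_of_pref_gap_general {S A : Type*} [Fintype S] [Fintype A]
    (d : S → ℝ) (πh πn : S → A → ℝ) (β M : ℝ) (hβ : 0 < β)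
    (hd0 : ∀ s, 0 ≤ d s) (hd1 : ∑ s, d s = 1)
    (hh0 : ∀ s a, 0 < πh s a) (hn0 : ∀ s a, 0 < πn s a)
    (hh1 : ∀ s, ∑ a, πh s a = 1) (hn1 : ∀ s, ∑ a, πn s a = 1)
    (hhM : ∀ s a a', |Real.log (πh s a) - Real.log (πh s a')| ≤ M) :
    ∑ s, d s * tvDist (πh s) (πn s) ≤
      Real.sqrt ((gLoss d πh πn β πn - gLoss d πh πn β πh) / (2 * β) + β * M ^ 2 / 8) := by
  set J := ∑ s, d s * jeffreysDiv (πh s) (πn s)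
  have hgap : β / 2 * J - β ^ 2 * M ^ 2 / 8 ≤ gLoss d πh πn β πn - gLoss d πh πn β πh :=
    gLoss_sub_gLoss_ge hd0 hd1 (fun s a => (hh0 s a).le) (fun s a => (hn0 s a).le) hh1 hn1 hhM
  have htv : ∑ s, d s * tvDist (πh s) (πn s) ^ 2 ≤ J / 4 := by
    rw [sum_div]
    refine sum_le_sum fun s _ => ?_
    rw [mul_div_assoc]
    exact mul_le_mul_of_nonneg_left
      (sq_tvDist_le_jeffreysDiv (hh0 s) (hn0 s) (hh1 s) (hn1 s)) (hd0 s)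
  have hJ : J / 4 ≤ (gLoss d πh πn β πn - gLoss d πh πn β πh) / (2 * β) + β * M ^ 2 / 8 := by
    rw [div_add' _ _ _ (by positivity), le_div_iff₀ (by positivity)]
    nlinarith [sq_nonneg M]
  refine Real.le_sqrt_of_sq_le ?_
  calc (∑ s, d s * tvDist (πh s) (πn s)) ^ 2 ≤ ∑ s, d s * tvDist (πh s) (πn s) ^ 2 :=
        sq_sum_mul_le_sum_mul_sq univ (fun s _ => hd0 s) hd1
    _ ≤ _ := htv.trans hJ

theorem tv_le_sqrt_of_pref_gap {S A : Type*} [Fintype S] [Fintype A]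
    (d : S → ℝ) (πh πn : S → A → ℝ) (β M : ℝ) (hβ : 0 < β)
    (hd0 : ∀ s, 0 ≤ d s) (hd1 : ∑ s, d s = 1)
    (hh0 : ∀ s a, 0 < πh s a) (hn0 : ∀ s a, 0 < πn s a)
    (hh1 : ∀ s, ∑ a, πh s a = 1) (hn1 : ∀ s, ∑ a, πn s a = 1)
    (hhM : ∀ s a a', |Real.log (πh s a) - Real.log (πh s a')| ≤ M)
    (hnM : ∀ s a a', |Real.log (πn s a) - Real.log (πn s a')| ≤ M) :
    ∑ s, d s * tvDist (πh s) (πn s) ≤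
      Real.sqrt ((gLoss d πh πn β πn - gLoss d πh πn β πh) / (2 * β) + β * M ^ 2 / 8) :=
  tv_le_sqrt_of_pref_gap_general d πh πn β M hβ hd0 hd1 hh0 hn0 hh1 hn1 hhM
end

section
/- Let S and A be finite sets, and let π_h, π_n be policies (mappings from S to probability distributions on A) whose log-probabilities have per-state oscillation at most M, i.e., |log π(a|s) − log π(a'|s)| ≤ M for π ∈ {π_h, π_n} and all s,a,a'. Let d be a distribution on S, and for each s let ρ_ideal^s(a⁺,a⁻) = π_h(a⁺|s)π_n(a⁻|s) and ρ_pref^s be an arbitrary distribution on A×A with δ_pref = E_{s∼d} D_TV(ρ_ideal^s, ρ_pref^s). Define ℓ^π(s,a⁺,a⁻) = −log σ(β(log π(a⁺|s) − log π(a⁻|s))), L(π) = E_{s∼d} E_{(a⁺,a⁻)∼ρ_pref^s}[ℓ^π(s,a⁺,a⁻)], g(π) = E_{s∼d} E_{(a⁺,a⁻)∼ρ_ideal^s}[ℓ^π(s,a⁺,a⁻)], and ε = L(π_n) − L(π_h). Then g(π_n) − g(π_h) ≤ ε + 4(βM + log 2)·δ_pref. -/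
open Finset

/-- Per-pair preference loss for policy `π`. -/
noncomputable def prefLoss {S A : Type*} (β : ℝ) (π : S → A → ℝ)
    (s : S) (ap an : A) : ℝ :=
  -(Real.log (sigmoid (β * (Real.log (π s ap) - Real.log (π s an)))))

/-! Each loss term is `log (1 + exp (-x))` with `|x| ≤ βM`, hence lies in `[0, βM + log 2]`, and
changing the pair distribution from `ρ_ideal^s` to `ρ_pref^s` moves the expectation of a function
bounded by `C` by at most `2C · D_TV`. Applying this to both policies and averaging over `s ∼ d`
gives the extra `4(βM + log 2) δ_pref`. -/

lemma neg_log_sigmoid (x : ℝ) : -Real.log (sigmoid x) = Real.log (1 + Real.exp (-x)) := by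
  rw [sigmoid, one_div, Real.log_inv, neg_neg]

lemma abs_neg_log_sigmoid_le {x c : ℝ} (hx : |x| ≤ c) :
    |-Real.log (sigmoid x)| ≤ c + Real.log 2 := by
  have hc : 0 ≤ c := (abs_nonneg x).trans hx
  have hexp : Real.exp (-x) ≤ Real.exp c := Real.exp_le_exp.mpr ((neg_le_abs x).trans hx)
  have hone : 1 ≤ Real.exp c := Real.one_le_exp hc
  rw [neg_log_sigmoid, abs_of_nonneg (Real.log_nonneg (by linarith [Real.exp_pos (-x)]))]
  calc Real.log (1 + Real.exp (-x)) ≤ Real.log (2 * Real.exp c) :=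
        Real.log_le_log (by positivity) (by linarith)
    _ = c + Real.log 2 := by
        rw [Real.log_mul two_ne_zero (Real.exp_ne_zero c), Real.log_exp, add_comm]

lemma abs_prefLoss_le {S A : Type*} {β M : ℝ} (hβ : 0 < β) {π : S → A → ℝ} {s : S} {ap an : A}
    (hM : |Real.log (π s ap) - Real.log (π s an)| ≤ M) :
    |prefLoss β π s ap an| ≤ β * M + Real.log 2 := by
  refine abs_neg_log_sigmoid_le ?_
  rw [abs_mul, abs_of_pos hβ]
  exact mul_le_mul_of_nonneg_left hM hβ.le

lemma abs_sum_mul_sub_sum_mul_le {X : Type*} [Fintype X] (P Q f : X → ℝ) {C : ℝ}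
    (hf : ∀ x, |f x| ≤ C) :
    |∑ x, P x * f x - ∑ x, Q x * f x| ≤ 2 * C * tvDist P Q := by
  rw [← sum_sub_distrib]
  calc |∑ x, (P x * f x - Q x * f x)| ≤ ∑ x, |P x - Q x| * C := by
        refine (abs_sum_le_sum_abs _ _).trans (sum_le_sum fun x _ => ?_)
        rw [← sub_mul, abs_mul]
        exact mul_le_mul_of_nonneg_left (hf x) (abs_nonneg _)
    _ = 2 * C * tvDist P Q := by rw [tvDist, ← sum_mul]; ring

lemma abs_sum_prod_mul_sub_sum_mul_le {A : Type*} [Fintype A] (P Q : A → ℝ) (ρ : A × A → ℝ)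
    (f : A → A → ℝ) {C : ℝ} (hf : ∀ a b, |f a b| ≤ C) :
    |∑ a, ∑ b, P a * Q b * f a b - ∑ p, ρ p * f p.1 p.2| ≤
      2 * C * tvDist (fun p : A × A => P p.1 * Q p.2) ρ := by
  rw [← Fintype.sum_prod_type']
  exact abs_sum_mul_sub_sum_mul_le (fun p => P p.1 * Q p.2) ρ (fun p => f p.1 p.2)
    fun p => hf p.1 p.2

theorem pref_gap_bound_general {S A : Type*} [Fintype S] [Fintype A]
    (d : S → ℝ) (πh πn : S → A → ℝ) (ρpref : S → A × A → ℝ) (β M : ℝ)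
    (hβ : 0 < β)
    (hd0 : ∀ s, 0 ≤ d s)
    (hhM : ∀ s a a', |Real.log (πh s a) - Real.log (πh s a')| ≤ M)
    (hnM : ∀ s a a', |Real.log (πn s a) - Real.log (πn s a')| ≤ M) :
    -- g(π) uses ideal pairs ρ_ideal^s(a⁺,a⁻) = π_h(a⁺|s)π_n(a⁻|s),
    -- L(π) uses the empirical pairs ρ_pref^s,
    -- δ_pref = E_{s∼d} D_TV(ρ_ideal^s, ρ_pref^s), ε = L(π_n) − L(π_h).
    (∑ s, d s * ∑ ap, ∑ an, πh s ap * πn s an * prefLoss β πn s ap an) -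
      (∑ s, d s * ∑ ap, ∑ an, πh s ap * πn s an * prefLoss β πh s ap an) ≤
    ((∑ s, d s * ∑ p : A × A, ρpref s p * prefLoss β πn s p.1 p.2) -
      (∑ s, d s * ∑ p : A × A, ρpref s p * prefLoss β πh s p.1 p.2)) +
    4 * (β * M + Real.log 2) *
      ∑ s, d s * tvDist (fun p : A × A => πh s p.1 * πn s p.2) (ρpref s) := by
  have hshift : ∀ π : S → A → ℝ, (∀ s a a', |Real.log (π s a) - Real.log (π s a')| ≤ M) →
      ∀ s, |∑ ap, ∑ an, πh s ap * πn s an * prefLoss β π s ap an -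
        ∑ p : A × A, ρpref s p * prefLoss β π s p.1 p.2| ≤
        2 * (β * M + Real.log 2) * tvDist (fun p : A × A => πh s p.1 * πn s p.2) (ρpref s) :=
    fun π hM s => abs_sum_prod_mul_sub_sum_mul_le _ _ _ _ fun _ _ => abs_prefLoss_le hβ (hM s _ _)
  have hstate : ∀ s,
      d s * ∑ ap, ∑ an, πh s ap * πn s an * prefLoss β πn s ap an -
        d s * ∑ ap, ∑ an, πh s ap * πn s an * prefLoss β πh s ap an ≤
      (d s * ∑ p : A × A, ρpref s p * prefLoss β πn s p.1 p.2 -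
        d s * ∑ p : A × A, ρpref s p * prefLoss β πh s p.1 p.2) +
      4 * (β * M + Real.log 2) *
        (d s * tvDist (fun p : A × A => πh s p.1 * πn s p.2) (ρpref s)) := by
    intro s
    have hn := (abs_le.mp (hshift πn hnM s)).2
    have hh := (abs_le.mp (hshift πh hhM s)).1
    linarith [mul_le_mul_of_nonneg_left hn (hd0 s), mul_le_mul_of_nonneg_left hh (hd0 s)]
  rw [mul_sum, ← sum_sub_distrib, ← sum_sub_distrib]
  exact (sum_le_sum fun s _ => hstate s).trans_eq sum_add_distrib

theorem pref_gap_bound {S A : Type*} [Fintype S] [Fintype A]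
    (d : S → ℝ) (πh πn : S → A → ℝ) (ρpref : S → A × A → ℝ) (β M : ℝ)
    (hβ : 0 < β)
    (hd0 : ∀ s, 0 ≤ d s) (hd1 : ∑ s, d s = 1)
    (hh0 : ∀ s a, 0 < πh s a) (hn0 : ∀ s a, 0 < πn s a)
    (hh1 : ∀ s, ∑ a, πh s a = 1) (hn1 : ∀ s, ∑ a, πn s a = 1)
    (hp0 : ∀ s p, 0 ≤ ρpref s p) (hp1 : ∀ s, ∑ p, ρpref s p = 1)
    (hhM : ∀ s a a', |Real.log (πh s a) - Real.log (πh s a')| ≤ M)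
    (hnM : ∀ s a a', |Real.log (πn s a) - Real.log (πn s a')| ≤ M) :
    -- g(π) uses ideal pairs ρ_ideal^s(a⁺,a⁻) = π_h(a⁺|s)π_n(a⁻|s),
    -- L(π) uses the empirical pairs ρ_pref^s,
    -- δ_pref = E_{s∼d} D_TV(ρ_ideal^s, ρ_pref^s), ε = L(π_n) − L(π_h).
    (∑ s, d s * ∑ ap, ∑ an, πh s ap * πn s an * prefLoss β πn s ap an) -
      (∑ s, d s * ∑ ap, ∑ an, πh s ap * πn s an * prefLoss β πh s ap an) ≤
    ((∑ s, d s * ∑ p : A × A, ρpref s p * prefLoss β πn s p.1 p.2) -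
      (∑ s, d s * ∑ p : A × A, ρpref s p * prefLoss β πh s p.1 p.2)) +
    4 * (β * M + Real.log 2) *
      ∑ s, d s * tvDist (fun p : A × A => πh s p.1 * πn s p.2) (ρpref s) :=
  pref_gap_bound_general d πh πn ρpref β M hβ hd0 hhM hnM
end

section
/- Let S, A be finite, π_h, π_n policies, Q* the Q-function of π_h with |Q*(s,a) − Q*(s,a')| ≤ U for all s,a,a', d_{π_n} the discounted occupancy measure of π_n, and d_pref any probability distribution on S with δ_dist = D_TV(d_{π_n}, d_pref). Then J(π_h) − J(π_n) ≤ (U/(1−γ)) · ( E_{s∼d_pref} D_TV(π_h(·|s), π_n(·|s)) + 2δ_dist ). -/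
open Finset

section MDP

variable {S A : Type*} [Fintype S] [Fintype A]

/-- `visit P π d0 t s` is the probability of being in state `s` at time `t`
when following policy `π` in the MDP with transition kernel `P`, starting
from the initial state distribution `d0`. -/
noncomputable def visit (P : S → A → S → ℝ) (π : S → A → ℝ) (d0 : S → ℝ) :
    ℕ → S → ℝ
  | 0 => d0
  | (t + 1) => fun s' => ∑ s, ∑ a, visit P π d0 t s * π s a * P s a s'

/-- Expected discounted return of policy `π` from initial distribution `d0`:
`J(π) = E_{τ∼P_π}[∑_t γ^t r(s_t,a_t)]`. -/
noncomputable def Jval (P : S → A → S → ℝ) (r : S → A → ℝ) (γ : ℝ)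
    (π : S → A → ℝ) (d0 : S → ℝ) : ℝ :=
  ∑' t : ℕ, γ ^ t * ∑ s, ∑ a, visit P π d0 t s * π s a * r s a

/-- Q-function of policy `π`:
`Q^π(s,a) = E[∑_t γ^t r(s_t,a_t) | s_0 = s, a_0 = a]` under `π`. -/
noncomputable def Qfun (P : S → A → S → ℝ) (r : S → A → ℝ) (γ : ℝ)
    (π : S → A → ℝ) (s : S) (a : A) : ℝ :=
  r s a + ∑' t : ℕ, γ ^ (t + 1) *
    ∑ s', ∑ a', visit P π (P s a) t s' * π s' a' * r s' a'

/-- Discounted state occupancy `d_π(s) = (1−γ) ∑_t γ^t Pr[s_t = s]`. -/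
noncomputable def dOcc (P : S → A → S → ℝ) (γ : ℝ) (π : S → A → ℝ)
    (d0 : S → ℝ) (s : S) : ℝ :=
  (1 - γ) * ∑' t : ℕ, γ ^ t * visit P π d0 t s

end MDP

/-!
By the performance difference lemma, `(1 - γ) (J(πh) - J(πn)) = E_{s ∼ d_{πn}} adv(s)` with
`adv(s) = ∑ₐ (πh - πn)(a|s) Q*(s,a)`. As `πh(·|s)` and `πn(·|s)` have the same mass, `Q*(s,·)` may
be recentred at the midpoint of its range, so `|adv(s)| ≤ U · D_TV(πh(·|s), πn(·|s)) ≤ U`.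
Replacing `d_{πn}` by `d_pref` then costs at most `U · ‖d_{πn} - d_pref‖₁ = 2 U δ_dist`.

The performance difference lemma is proved in matrix form: the value of `π` is the resolvent
`(1 - γ K_π)⁻¹ R_π` of the row-stochastic transition matrix `K_π`, and `V_{πh} - V_{πn}` solves
`w = adv + γ K_{πn} w`, whose solution is unique since `K_{πn}` is a contraction in the sup norm.
-/

section TotalVariation

variable {X : Type*}

lemma exists_forall_abs_sub_le_half [Finite X] {Q : X → ℝ} {U : ℝ}
    (hQ : ∀ x y, |Q x - Q y| ≤ U) : ∃ c, ∀ x, |Q x - c| ≤ U / 2 := by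
  rcases isEmpty_or_nonempty X with hX | hX
  · exact ⟨0, fun x => isEmptyElim x⟩
  obtain ⟨xmax, hmax⟩ := Finite.exists_max Q
  obtain ⟨xmin, hmin⟩ := Finite.exists_min Q
  refine ⟨(Q xmax + Q xmin) / 2, fun x => abs_le.2 ⟨?_, ?_⟩⟩ <;>
    linarith [hmax x, hmin x, (abs_le.1 (hQ xmax xmin)).2]

variable [Fintype X]

lemma two_mul_tvDist (p q : X → ℝ) : 2 * tvDist p q = ∑ x, |p x - q x| := by
  rw [tvDist]
  ring

lemma tvDist_le_one {p q : X → ℝ} (hp0 : ∀ x, 0 ≤ p x) (hp1 : ∑ x, p x = 1)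
    (hq0 : ∀ x, 0 ≤ q x) (hq1 : ∑ x, q x = 1) : tvDist p q ≤ 1 := by
  have : ∑ x, |p x - q x| ≤ ∑ x, (p x + q x) := Finset.sum_le_sum fun x _ =>
    (abs_sub _ _).trans_eq (by rw [abs_of_nonneg (hp0 x), abs_of_nonneg (hq0 x)])
  rw [Finset.sum_add_distrib, hp1, hq1, ← two_mul_tvDist] at this
  linarith

lemma abs_sum_sub_mul_le_mul_tvDist {p q Q : X → ℝ} {U : ℝ} (hpq : ∑ x, p x = ∑ x, q x)
    (hQ : ∀ x y, |Q x - Q y| ≤ U) : |∑ x, (p x - q x) * Q x| ≤ U * tvDist p q := by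
  obtain ⟨c, hc⟩ := exists_forall_abs_sub_le_half hQ
  have hcentre : ∑ x, (p x - q x) * Q x = ∑ x, (p x - q x) * (Q x - c) := by
    simp only [mul_sub, Finset.sum_sub_distrib, ← Finset.sum_mul, hpq, sub_self, zero_mul,
      sub_zero]
  calc |∑ x, (p x - q x) * Q x| ≤ ∑ x, |p x - q x| * (U / 2) := by
        rw [hcentre]
        refine (Finset.abs_sum_le_sum_abs _ _).trans (Finset.sum_le_sum fun x _ => ?_)
        rw [abs_mul]
        exact mul_le_mul_of_nonneg_left (hc x) (abs_nonneg _)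
    _ = U * tvDist p q := by rw [← Finset.sum_mul, ← two_mul_tvDist]; ring

lemma sum_mul_le_add_tvDist {μ ν f g : X → ℝ} {M : ℝ} (hν : ∀ x, 0 ≤ ν x)
    (hfg : ∀ x, f x ≤ g x) (hfM : ∀ x, |f x| ≤ M) :
    ∑ x, μ x * f x ≤ ∑ x, ν x * g x + 2 * tvDist μ ν * M := by
  have hshift : ∑ x, (μ x - ν x) * f x ≤ 2 * tvDist μ ν * M := by
    rw [two_mul_tvDist, Finset.sum_mul]
    refine Finset.sum_le_sum fun x _ => (le_abs_self _).trans ?_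
    rw [abs_mul]
    exact mul_le_mul_of_nonneg_left (hfM x) (abs_nonneg _)
  have hbase : ∑ x, ν x * f x ≤ ∑ x, ν x * g x :=
    Finset.sum_le_sum fun x _ => mul_le_mul_of_nonneg_left (hfg x) (hν x)
  have hsplit : ∑ x, μ x * f x = ∑ x, ν x * f x + ∑ x, (μ x - ν x) * f x := by
    rw [← Finset.sum_add_distrib]
    exact Finset.sum_congr rfl fun x _ => by ring
  linarith

end TotalVariation

open Matrix

lemma summable_geometric_smul_of_norm_le {E : Type*} [NormedAddCommGroup E] [NormedSpace ℝ E]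
    [CompleteSpace E] {γ : ℝ} (hγ0 : 0 ≤ γ) (hγ1 : γ < 1) {w : ℕ → E} {C : ℝ}
    (hw : ∀ t, ‖w t‖ ≤ C) : Summable fun t => γ ^ t • w t := by
  refine .of_norm_bounded ((summable_geometric_of_lt_one hγ0 hγ1).mul_left C) fun t => ?_
  rw [norm_smul, Real.norm_of_nonneg (pow_nonneg hγ0 t), mul_comm]
  exact mul_le_mul_of_nonneg_right (hw t) (pow_nonneg hγ0 t)

section StochasticMatrix

variable {n : Type*} [Fintype n] [DecidableEq n] {M : Matrix n n ℝ}

lemma norm_mulVec_le_of_mem_rowStochastic (hM : M ∈ rowStochastic ℝ n) (v : n → ℝ) :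
    ‖M *ᵥ v‖ ≤ ‖v‖ := by
  refine (pi_norm_le_iff_of_nonneg (norm_nonneg v)).2 fun i => ?_
  calc ‖(M *ᵥ v) i‖ ≤ ∑ j, M i j * ‖v‖ := by
        refine (norm_sum_le _ _).trans (Finset.sum_le_sum fun j _ => ?_)
        rw [norm_mul, Real.norm_of_nonneg (nonneg_of_mem_rowStochastic hM)]
        exact mul_le_mul_of_nonneg_left (norm_le_pi_norm v j) (nonneg_of_mem_rowStochastic hM)
    _ = ‖v‖ := by rw [← Finset.sum_mul, sum_row_of_mem_rowStochastic hM, one_mul]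

lemma norm_vecMul_le_of_mem_rowStochastic (hM : M ∈ rowStochastic ℝ n) (d : n → ℝ) :
    ‖d ᵥ* M‖ ≤ ∑ i, ‖d i‖ := by
  refine (pi_norm_le_iff_of_nonneg (by positivity)).2 fun j => ?_
  refine (norm_sum_le _ _).trans (Finset.sum_le_sum fun i _ => ?_)
  rw [norm_mul, Real.norm_of_nonneg (nonneg_of_mem_rowStochastic hM)]
  exact mul_le_of_le_one_right (norm_nonneg _) (le_one_of_mem_rowStochastic hM)

variable {γ : ℝ}

lemma summable_geometric_smul_pow_mulVec (hγ0 : 0 ≤ γ) (hγ1 : γ < 1)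
    (hM : M ∈ rowStochastic ℝ n) (v : n → ℝ) : Summable fun t => γ ^ t • (M ^ t *ᵥ v) :=
  summable_geometric_smul_of_norm_le hγ0 hγ1 fun t =>
    norm_mulVec_le_of_mem_rowStochastic ((rowStochastic ℝ n).pow_mem hM t) v

lemma summable_geometric_smul_vecMul_pow (hγ0 : 0 ≤ γ) (hγ1 : γ < 1)
    (hM : M ∈ rowStochastic ℝ n) (d : n → ℝ) : Summable fun t => γ ^ t • (d ᵥ* M ^ t) :=
  summable_geometric_smul_of_norm_le hγ0 hγ1 fun t =>
    norm_vecMul_le_of_mem_rowStochastic ((rowStochastic ℝ n).pow_mem hM t) d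

noncomputable def discountedSum (γ : ℝ) (M : Matrix n n ℝ) (v : n → ℝ) : n → ℝ :=
  ∑' t : ℕ, γ ^ t • (M ^ t *ᵥ v)

lemma discountedSum_eq_add (hγ0 : 0 ≤ γ) (hγ1 : γ < 1) (hM : M ∈ rowStochastic ℝ n)
    (v : n → ℝ) : discountedSum γ M v = v + γ • (M *ᵥ discountedSum γ M v) := by
  have hs := summable_geometric_smul_pow_mulVec hγ0 hγ1 hM v
  have hmap : M *ᵥ discountedSum γ M v = ∑' t : ℕ, M *ᵥ (γ ^ t • (M ^ t *ᵥ v)) :=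
    hs.map_tsum M.mulVecLin (LinearMap.continuous_of_finiteDimensional _)
  rw [hmap, ← tsum_const_smul'', discountedSum, hs.tsum_eq_zero_add]
  simp [pow_succ', mul_smul, mulVec_mulVec, mulVec_smul]

lemma eq_discountedSum_of_eq_add (hγ0 : 0 ≤ γ) (hγ1 : γ < 1) (hM : M ∈ rowStochastic ℝ n)
    {v w : n → ℝ} (hw : w = v + γ • (M *ᵥ w)) : w = discountedSum γ M v := by
  set D := discountedSum γ M v
  have hD : D = v + γ • (M *ᵥ D) := discountedSum_eq_add hγ0 hγ1 hM v
  have hfix : w - D = γ • (M *ᵥ (w - D)) := by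
    conv_lhs => rw [hw, hD]
    rw [mulVec_sub, smul_sub, add_sub_add_left_eq_sub]
  have hcontract : ‖w - D‖ ≤ γ * ‖w - D‖ := calc
    ‖w - D‖ = γ * ‖M *ᵥ (w - D)‖ := by
      conv_lhs => rw [hfix, norm_smul, Real.norm_of_nonneg hγ0]
    _ ≤ γ * ‖w - D‖ := mul_le_mul_of_nonneg_left (norm_mulVec_le_of_mem_rowStochastic hM _) hγ0
  have : ‖w - D‖ = 0 := by nlinarith [norm_nonneg (w - D)]
  exact sub_eq_zero.1 (norm_eq_zero.1 this)

lemma dotProduct_discountedSum (hγ0 : 0 ≤ γ) (hγ1 : γ < 1) (hM : M ∈ rowStochastic ℝ n)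
    (d v : n → ℝ) :
    d ⬝ᵥ discountedSum γ M v = (∑' t : ℕ, γ ^ t • (d ᵥ* M ^ t)) ⬝ᵥ v := by
  have hleft : d ⬝ᵥ discountedSum γ M v = ∑' t : ℕ, d ⬝ᵥ (γ ^ t • (M ^ t *ᵥ v)) :=
    (summable_geometric_smul_pow_mulVec hγ0 hγ1 hM v).map_tsum (dotProductBilin ℝ ℝ d)
      (LinearMap.continuous_of_finiteDimensional _)
  have hright : (∑' t : ℕ, γ ^ t • (d ᵥ* M ^ t)) ⬝ᵥ v = ∑' t : ℕ, (γ ^ t • (d ᵥ* M ^ t)) ⬝ᵥ v :=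
    (summable_geometric_smul_vecMul_pow hγ0 hγ1 hM d).map_tsum ((dotProductBilin ℝ ℝ).flip v)
      (LinearMap.continuous_of_finiteDimensional _)
  rw [hleft, hright]
  simp [dotProduct_mulVec]

end StochasticMatrix

section MDP

variable {S A : Type*} [Fintype S] [Fintype A]

def transitionMatrix (P : S → A → S → ℝ) (π : S → A → ℝ) : Matrix S S ℝ :=
  fun s s' => ∑ a, π s a * P s a s'

def expectedReward (r : S → A → ℝ) (π : S → A → ℝ) : S → ℝ :=
  fun s => ∑ a, π s a * r s a

variable [DecidableEq S] {P : S → A → S → ℝ} {r : S → A → ℝ} {γ : ℝ} {π : S → A → ℝ}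

noncomputable def valueFun (P : S → A → S → ℝ) (r : S → A → ℝ) (γ : ℝ) (π : S → A → ℝ) :
    S → ℝ :=
  discountedSum γ (transitionMatrix P π) (expectedReward r π)

lemma visit_eq_vecMul_pow (d : S → ℝ) (t : ℕ) :
    visit P π d t = d ᵥ* transitionMatrix P π ^ t := by
  induction t with
  | zero => simp [visit]
  | succ t ih =>
    ext s'
    rw [pow_succ, ← vecMul_vecMul, ← ih]
    simp only [visit, vecMul, dotProduct, transitionMatrix, Finset.mul_sum, mul_assoc]

lemma transitionMatrix_mem_rowStochastic
    (hP0 : ∀ s a s', 0 ≤ P s a s') (hP1 : ∀ s a, ∑ s', P s a s' = 1)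
    (hπ0 : ∀ s a, 0 ≤ π s a) (hπ1 : ∀ s, ∑ a, π s a = 1) :
    transitionMatrix P π ∈ rowStochastic ℝ S := by
  refine mem_rowStochastic_iff_sum.2 ⟨fun s s' => ?_, fun s => ?_⟩
  · exact Finset.sum_nonneg fun a _ => mul_nonneg (hπ0 s a) (hP0 s a s')
  · simp only [transitionMatrix]
    rw [Finset.sum_comm]
    simp [← Finset.mul_sum, hP1, hπ1]

lemma Jval_eq_dotProduct_valueFun (hγ0 : 0 ≤ γ) (hγ1 : γ < 1)
    (hK : transitionMatrix P π ∈ rowStochastic ℝ S) (d : S → ℝ) :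
    Jval P r γ π d = d ⬝ᵥ valueFun P r γ π := by
  have hterm : ∀ t : ℕ, γ ^ t * ∑ s, ∑ a, visit P π d t s * π s a * r s a =
      d ⬝ᵥ (γ ^ t • (transitionMatrix P π ^ t *ᵥ expectedReward r π)) := fun t => by
    rw [dotProduct_smul, dotProduct_mulVec, ← visit_eq_vecMul_pow]
    simp [dotProduct, expectedReward, Finset.mul_sum, mul_assoc]
  have hmap : d ⬝ᵥ valueFun P r γ π =
      ∑' t : ℕ, d ⬝ᵥ (γ ^ t • (transitionMatrix P π ^ t *ᵥ expectedReward r π)) :=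
    (summable_geometric_smul_pow_mulVec hγ0 hγ1 hK _).map_tsum (dotProductBilin ℝ ℝ d)
      (LinearMap.continuous_of_finiteDimensional _)
  rw [hmap, Jval]
  exact tsum_congr hterm

lemma valueFun_eq_add (hγ0 : 0 ≤ γ) (hγ1 : γ < 1)
    (hK : transitionMatrix P π ∈ rowStochastic ℝ S) :
    valueFun P r γ π = expectedReward r π + γ • (transitionMatrix P π *ᵥ valueFun P r γ π) :=
  discountedSum_eq_add hγ0 hγ1 hK _

lemma Qfun_eq_add_dotProduct_valueFun (hγ0 : 0 ≤ γ) (hγ1 : γ < 1)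
    (hK : transitionMatrix P π ∈ rowStochastic ℝ S) (s : S) (a : A) :
    Qfun P r γ π s a = r s a + γ * (P s a ⬝ᵥ valueFun P r γ π) := by
  rw [← Jval_eq_dotProduct_valueFun hγ0 hγ1 hK, Qfun, Jval, ← tsum_mul_left]
  simp only [pow_succ', mul_assoc]

lemma sum_mul_Qfun (hγ0 : 0 ≤ γ) (hγ1 : γ < 1)
    (hK : transitionMatrix P π ∈ rowStochastic ℝ S) (ρ : S → A → ℝ) (s : S) :
    ∑ a, ρ s a * Qfun P r γ π s a =
      expectedReward r ρ s + γ * (transitionMatrix P ρ *ᵥ valueFun P r γ π) s := by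
  simp only [Qfun_eq_add_dotProduct_valueFun hγ0 hγ1 hK, mul_add, Finset.sum_add_distrib,
    expectedReward, mulVec, dotProduct, transitionMatrix, Finset.mul_sum, Finset.sum_mul]
  rw [Finset.sum_comm]
  congr 1
  exact Finset.sum_congr rfl fun a _ => Finset.sum_congr rfl fun s' _ => by ring

lemma valueFun_eq_sum_mul_Qfun (hγ0 : 0 ≤ γ) (hγ1 : γ < 1)
    (hK : transitionMatrix P π ∈ rowStochastic ℝ S) (s : S) :
    valueFun P r γ π s = ∑ a, π s a * Qfun P r γ π s a := by
  rw [sum_mul_Qfun hγ0 hγ1 hK]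
  exact congrFun (valueFun_eq_add hγ0 hγ1 hK) s

lemma dOcc_eq_smul_tsum (hγ0 : 0 ≤ γ) (hγ1 : γ < 1)
    (hK : transitionMatrix P π ∈ rowStochastic ℝ S) (d : S → ℝ) :
    dOcc P γ π d = (1 - γ) • ∑' t : ℕ, γ ^ t • (d ᵥ* transitionMatrix P π ^ t) := by
  ext s
  rw [Pi.smul_apply, tsum_apply (summable_geometric_smul_vecMul_pow hγ0 hγ1 hK d)]
  simp [dOcc, visit_eq_vecMul_pow]

theorem performance_difference {πh πn : S → A → ℝ} (hγ0 : 0 ≤ γ) (hγ1 : γ < 1)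
    (hKh : transitionMatrix P πh ∈ rowStochastic ℝ S)
    (hKn : transitionMatrix P πn ∈ rowStochastic ℝ S) (d0 : S → ℝ) :
    (1 - γ) * (Jval P r γ πh d0 - Jval P r γ πn d0) =
      ∑ s, dOcc P γ πn d0 s * ∑ a, (πh s a - πn s a) * Qfun P r γ πh s a := by
  set adv : S → ℝ := fun s => ∑ a, (πh s a - πn s a) * Qfun P r γ πh s a
  have hdiff : valueFun P r γ πh - valueFun P r γ πn =
      discountedSum γ (transitionMatrix P πn) adv := by
    refine eq_discountedSum_of_eq_add hγ0 hγ1 hKn (funext fun s => ?_)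
    have hh := valueFun_eq_sum_mul_Qfun hγ0 hγ1 hKh (r := r) s
    have hq := sum_mul_Qfun hγ0 hγ1 hKh (r := r) πn s
    have hn := congrFun (valueFun_eq_add hγ0 hγ1 hKn (r := r)) s
    simp only [Pi.sub_apply, Pi.add_apply, Pi.smul_apply, smul_eq_mul, mulVec_sub, adv,
      sub_mul, Finset.sum_sub_distrib] at hn ⊢
    linarith
  calc (1 - γ) * (Jval P r γ πh d0 - Jval P r γ πn d0)
      = (1 - γ) * (d0 ⬝ᵥ (valueFun P r γ πh - valueFun P r γ πn)) := by
        rw [Jval_eq_dotProduct_valueFun hγ0 hγ1 hKh, Jval_eq_dotProduct_valueFun hγ0 hγ1 hKn,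
          dotProduct_sub]
    _ = dOcc P γ πn d0 ⬝ᵥ adv := by
        rw [hdiff, dotProduct_discountedSum hγ0 hγ1 hKn, dOcc_eq_smul_tsum hγ0 hγ1 hKn,
          smul_dotProduct, smul_eq_mul]

end MDP

theorem perf_gap_state_dist_shift_general {S A : Type*} [Fintype S] [Fintype A]
    (P : S → A → S → ℝ) (r : S → A → ℝ) (γ : ℝ) (d0 : S → ℝ)
    (πh πn : S → A → ℝ) (dpref : S → ℝ) (U : ℝ)
    (hγ0 : 0 < γ) (hγ1 : γ < 1)
    (hP0 : ∀ s a s', 0 ≤ P s a s') (hP1 : ∀ s a, ∑ s', P s a s' = 1)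
    (hh0 : ∀ s a, 0 ≤ πh s a) (hh1 : ∀ s, ∑ a, πh s a = 1)
    (hn0 : ∀ s a, 0 ≤ πn s a) (hn1 : ∀ s, ∑ a, πn s a = 1)
    (hpref0 : ∀ s, 0 ≤ dpref s)
    (hU : ∀ s a a', |Qfun P r γ πh s a - Qfun P r γ πh s a'| ≤ U) :
    Jval P r γ πh d0 - Jval P r γ πn d0 ≤
      (U / (1 - γ)) *
        ((∑ s, dpref s * tvDist (πh s) (πn s)) +
          2 * tvDist (dOcc P γ πn d0) dpref) := by
  classical
  set adv : S → ℝ := fun s => ∑ a, (πh s a - πn s a) * Qfun P r γ πh s a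
  have hpdl : (1 - γ) * (Jval P r γ πh d0 - Jval P r γ πn d0) = ∑ s, dOcc P γ πn d0 s * adv s :=
    performance_difference hγ0.le hγ1 (transitionMatrix_mem_rowStochastic hP0 hP1 hh0 hh1)
      (transitionMatrix_mem_rowStochastic hP0 hP1 hn0 hn1) d0
  have hadv : ∀ s, |adv s| ≤ U * tvDist (πh s) (πn s) := fun s =>
    abs_sum_sub_mul_le_mul_tvDist (by rw [hh1, hn1]) (hU s)
  have hadvU : ∀ s, |adv s| ≤ U := fun s => by
    obtain ⟨a, -, -⟩ := Finset.exists_ne_zero_of_sum_ne_zero ((hh1 s).trans_ne one_ne_zero)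
    have hU0 : 0 ≤ U := (abs_nonneg _).trans (hU s a a)
    exact (hadv s).trans
      (mul_le_of_le_one_right hU0 (tvDist_le_one (hh0 s) (hh1 s) (hn0 s) (hn1 s)))
  have hbound := sum_mul_le_add_tvDist (μ := dOcc P γ πn d0) hpref0
    (fun s => (le_abs_self _).trans (hadv s)) hadvU
  rw [div_mul_eq_mul_div, le_div_iff₀ (sub_pos.2 hγ1), mul_comm, hpdl]
  refine hbound.trans_eq ?_
  simp only [mul_left_comm _ U, ← Finset.mul_sum]
  ring

theorem perf_gap_state_dist_shift {S A : Type*} [Fintype S] [Fintype A]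
    (P : S → A → S → ℝ) (r : S → A → ℝ) (γ : ℝ) (d0 : S → ℝ)
    (πh πn : S → A → ℝ) (dpref : S → ℝ) (U : ℝ)
    (hγ0 : 0 < γ) (hγ1 : γ < 1)
    (hP0 : ∀ s a s', 0 ≤ P s a s') (hP1 : ∀ s a, ∑ s', P s a s' = 1)
    (hd0 : ∀ s, 0 ≤ d0 s) (hd1 : ∑ s, d0 s = 1)
    (hh0 : ∀ s a, 0 ≤ πh s a) (hh1 : ∀ s, ∑ a, πh s a = 1)
    (hn0 : ∀ s a, 0 ≤ πn s a) (hn1 : ∀ s, ∑ a, πn s a = 1)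
    (hpref0 : ∀ s, 0 ≤ dpref s) (hpref1 : ∑ s, dpref s = 1)
    (hU : ∀ s a a', |Qfun P r γ πh s a - Qfun P r γ πh s a'| ≤ U) :
    Jval P r γ πh d0 - Jval P r γ πn d0 ≤
      (U / (1 - γ)) *
        ((∑ s, dpref s * tvDist (πh s) (πn s)) +
          2 * tvDist (dOcc P γ πn d0) dpref) :=
  perf_gap_state_dist_shift_general P r γ d0 πh πn dpref U hγ0 hγ1 hP0 hP1 hh0 hh1 hn0 hn1 hpref0 hU
end
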